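/- Define A(n) = Σ_{k=0}^{n} binom(n,k)² binom(2k,k). Then for every prime p and all integers n, r ≥ 1, A(n p^r) ≡ A(n p^{r-1}) (mod p^r). -/

import Mathlib

/-- `A(n) = ∑_{k=0}^n C(n,k)² C(2k,k)`. -/
def apery8 (n : ℕ) : ℤ :=
  ∑ k ∈ Finset.range (n + 1), (n.choose k : ℤ) ^ 2 * ((2 * k).choose k : ℤ)

namespace Apery8Aux

open Polynomial Finset

noncomputable abbrev Zx : Type := Polynomial ℤ

/-- `F = (1+y)((1+x)² + x y)` as an element of `ℤ[x][y]`. -/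
noncomputable def F : Polynomial Zx :=
  (1 + X) * (C ((1 + Polynomial.X) ^ 2) + C Polynomial.X * X)

lemma coeff_C_add_C_mul_X_pow {R : Type*} [CommSemiring R] (a b : R) (n j : ℕ) (hj : j ≤ n) :
    ((C a + C b * X) ^ n).coeff j = (n.choose j : R) * (a ^ (n - j) * b ^ j) := by
  rw [add_comm (C a), add_pow, finset_sum_coeff]
  have hform : ∀ k : ℕ, (C b * X) ^ k * C a ^ (n - k) * ((n.choose k : ℕ) : Polynomial R)
      = C ((n.choose k : R) * (a ^ (n - k) * b ^ k)) * X ^ k := by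
    intro k
    simp only [mul_pow, C_mul, C_pow, C_eq_natCast]
    ring
  rw [Finset.sum_eq_single j]
  · rw [hform, coeff_C_mul, coeff_X_pow, if_pos rfl, mul_one]
  · intro k _ hkj
    rw [hform, coeff_C_mul, coeff_X_pow, if_neg (fun h => hkj h.symm), mul_zero]
  · intro h
    exact absurd (mem_range.mpr (Nat.lt_succ_of_le hj)) h

lemma key (m : ℕ) : ((F ^ m).coeff m).coeff m = apery8 m := by
  have h1 : (F ^ m).coeff m
      = ∑ k ∈ range (m + 1),
          ((m.choose k : Zx)) * ((m.choose k : Zx) *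
            (((1 + Polynomial.X) ^ 2) ^ k * Polynomial.X ^ (m - k))) := by
    rw [show F = (1 + X) * (C ((1 + Polynomial.X) ^ 2) + C Polynomial.X * X) from rfl, mul_pow,
      coeff_mul, Finset.Nat.sum_antidiagonal_eq_sum_range_succ_mk]
    refine Finset.sum_congr rfl fun k hk => ?_
    have hk' : k ≤ m := Nat.lt_succ_iff.mp (mem_range.mp hk)
    rw [coeff_one_add_X_pow, coeff_C_add_C_mul_X_pow _ _ _ _ (Nat.sub_le m k),
      Nat.sub_sub_self hk', Nat.choose_symm hk']
  rw [h1, finset_sum_coeff, apery8]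
  refine Finset.sum_congr rfl fun k hk => ?_
  have hk' : k ≤ m := Nat.lt_succ_iff.mp (mem_range.mp hk)
  have h2 : (m.choose k : Zx) * ((m.choose k : Zx) *
        (((1 + Polynomial.X) ^ 2) ^ k * Polynomial.X ^ (m - k)))
      = (C ((m.choose k : ℤ) ^ 2) * (1 + Polynomial.X) ^ (2 * k)) * Polynomial.X ^ (m - k) := by
    simp only [← C_eq_natCast, ← pow_mul, map_pow, Int.cast_natCast]
    ring
  rw [h2, coeff_mul_X_pow', if_pos (Nat.sub_le m k), Nat.sub_sub_self hk', coeff_C_mul,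
    coeff_one_add_X_pow]

/-- The "expand both variables by p" ring homomorphism on `ℤ[x][y]`. -/
noncomputable def Φ (p : ℕ) : Polynomial Zx →+* Polynomial Zx :=
  (expand Zx p).toRingHom.comp (mapRingHom (expand ℤ p).toRingHom)

lemma Φ_apply (p : ℕ) (g : Polynomial Zx) :
    Φ p g = expand Zx p (g.map (expand ℤ p).toRingHom) := rfl

lemma coeff_Φ (p : ℕ) (hp : 0 < p) (g : Polynomial Zx) (i j : ℕ) :
    ((Φ p g).coeff (p * i)).coeff (p * j) = (g.coeff i).coeff j := by
  rw [Φ_apply, coeff_expand_mul' hp, coeff_map]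
  exact coeff_expand_mul' hp _ j

lemma dvd_pow_sub_Φ (p : ℕ) (hp : p.Prime) (f : Polynomial Zx) :
    (p : Polynomial Zx) ∣ f ^ p - Φ p f := by
  haveI : Fact p.Prime := ⟨hp⟩
  set S := ZMod p with hS
  let c : ℤ →+* S := Int.castRingHom S
  let c1 : Zx →+* Polynomial S := mapRingHom c
  let π : Polynomial Zx →+* Polynomial (Polynomial S) := mapRingHom c1
  have hfrob : ∀ g : Polynomial S, Polynomial.map (frobenius S p) g = g := by
    intro g; ext i; rw [coeff_map, frobenius_def, ZMod.pow_card]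
  have e1 : ∀ a : Zx, (Polynomial.map c a) ^ p = Polynomial.map c (expand ℤ p a) := by
    intro a
    have h := map_frobenius_expand p (Polynomial.map c a)
    rw [hfrob] at h
    rw [← h, map_expand]
  have hπ : π (f ^ p - Φ p f) = 0 := by
    have hL : π (f ^ p) = expand (Polynomial S) p
        (Polynomial.map ((frobenius (Polynomial S) p).comp c1) f) := by
      have h := map_frobenius_expand p (Polynomial.map c1 f)
      rw [map_expand] at h
      show Polynomial.map c1 (f ^ p) = _
      rw [Polynomial.map_pow, ← h, Polynomial.map_map]
    have hR : π (Φ p f) = expand (Polynomial S) p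
        (Polynomial.map (c1.comp (expand ℤ p).toRingHom) f) := by
      show Polynomial.map c1 (expand Zx p (f.map (expand ℤ p).toRingHom)) = _
      rw [map_expand, Polynomial.map_map]
    have hcomp : (frobenius (Polynomial S) p).comp c1
        = c1.comp (expand ℤ p).toRingHom := by
      refine RingHom.ext fun a => ?_
      show frobenius (Polynomial S) p (Polynomial.map c a) = Polynomial.map c (expand ℤ p a)
      rw [frobenius_def]
      exact e1 a
    rw [map_sub, hL, hR, hcomp, sub_self]
  -- now deduce divisibility from vanishing mod p
  have hcoeff : ∀ i j : ℕ, (p : ℤ) ∣ (((f ^ p - Φ p f).coeff i).coeff j) := by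
    intro i j
    have h0 : (((π (f ^ p - Φ p f)).coeff i).coeff j) = 0 := by rw [hπ]; simp
    have h1 : ((π (f ^ p - Φ p f)).coeff i).coeff j
        = (((((f ^ p - Φ p f).coeff i).coeff j : ℤ) : S)) := by
      show ((Polynomial.map c1 _).coeff i).coeff j = _
      rw [coeff_map]
      show (Polynomial.map c _).coeff j = _
      rw [coeff_map]
      rfl
    rw [h1] at h0
    exact_mod_cast (ZMod.intCast_zmod_eq_zero_iff_dvd _ p).mp h0
  have hpC : (p : Polynomial Zx) = C (C ((p : ℤ))) := by
    simp
  rw [hpC, C_dvd_iff_dvd_coeff]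
  intro i
  rw [C_dvd_iff_dvd_coeff]
  intro j
  exact hcoeff i j

lemma coeff_dvd_of_dvd (q : ℤ) (G H : Polynomial Zx) (h : (C (C q)) ∣ G - H) (i j : ℕ) :
    q ∣ (G.coeff i).coeff j - (H.coeff i).coeff j := by
  obtain ⟨h', hh⟩ := h
  have h2 := congrArg (fun g : Polynomial Zx => (g.coeff i).coeff j) hh
  simp only [coeff_sub, coeff_C_mul] at h2
  exact ⟨(h'.coeff i).coeff j, h2⟩

end Apery8Aux

open Apery8Aux Polynomial in
theorem stmt_12 (p : ℕ) (hp : p.Prime) (n r : ℕ) (hn : 1 ≤ n) (hr : 1 ≤ r) :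
    Int.ModEq ((p : ℤ) ^ r) (apery8 (n * p ^ r)) (apery8 (n * p ^ (r - 1))) := by
  haveI : Fact p.Prime := ⟨hp⟩
  have hp0 : 0 < p := hp.pos
  set M := n * p ^ (r - 1) with hM
  have hpr : p * p ^ (r - 1) = p ^ r := by
    conv_rhs => rw [← Nat.sub_add_cancel hr]
    rw [pow_succ]; ring
  have h1 : (p : Polynomial Zx) ∣ F ^ p - Φ p F := dvd_pow_sub_Φ p hp F
  have h2 : ((p : Polynomial Zx)) ^ r ∣ (F ^ p) ^ p ^ (r - 1) - (Φ p F) ^ p ^ (r - 1) := by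
    have h := dvd_sub_pow_of_dvd_sub h1 (r - 1)
    rwa [Nat.sub_add_cancel hr] at h
  have h3 : ((p : Polynomial Zx)) ^ r ∣ F ^ (n * p ^ r) - Φ p (F ^ M) := by
    have hxy := sub_dvd_pow_sub_pow ((F ^ p) ^ p ^ (r - 1)) ((Φ p F) ^ p ^ (r - 1)) n
    have h := dvd_trans h2 hxy
    rw [← pow_mul, ← pow_mul, ← pow_mul] at h
    have e1 : p * (p ^ (r - 1) * n) = n * p ^ r := by rw [← hpr]; ring
    have e2 : p ^ (r - 1) * n = M := by rw [hM]; ring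
    rw [e1, e2, ← map_pow] at h
    exact h
  have hpow : ((p : Polynomial Zx)) ^ r = C (C ((p : ℤ) ^ r)) := by
    simp
  rw [hpow] at h3
  have h4 := coeff_dvd_of_dvd _ _ _ h3 (n * p ^ r) (n * p ^ r)
  rw [key] at h4
  have hN : n * p ^ r = p * M := by rw [hM, ← hpr]; ring
  rw [show ((Φ p (F ^ M)).coeff (n * p ^ r)).coeff (n * p ^ r)
      = ((F ^ M).coeff M).coeff M by rw [hN]; exact coeff_Φ p hp0 _ M M, key] at h4
  have : (p : ℤ) ^ r ∣ apery8 M - apery8 (n * p ^ r) := by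
    have := dvd_neg.mpr h4
    rwa [neg_sub] at this
  exact Int.ModEq.symm (Int.modEq_iff_dvd.mpr (by simpa using h4))
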